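/- Let G = (V, E) be a finite simple graph, let G̃ be its subdivision graph with associated function f̃, and let F = {f_1, …, f_k} be unimodal functions on G̃ with Σ_{i=1}^{k} f_i = f̃. Let v ∈ V be a vertex with deg_G(v) ≥ 1 that is not a mode of any function in F. For each edge e of G incident to v, let F^v_e = {f ∈ F | f(m_e) ≥ f(v) and f(v) ≥ f(m_{e'}) for every other edge e' of G incident to v}. Then every function in F belongs to F^v_e for some edge e incident to v, and for every edge e incident to v, Σ_{f ∈ F^v_e} f(v) = 1. -/

import Mathlib

open SimpleGraph

/-- A set of vertices induces a tree in `G`. -/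
def InducesTree {V : Type*} (G : SimpleGraph V) (S : Set V) : Prop :=
  (G.induce S).IsTree

/-- `f` is unimodal on `G`: every positive superlevel set is empty or induces a tree. -/
def UnimodalOn {V : Type*} (G : SimpleGraph V) (f : V → NNReal) : Prop :=
  ∀ c : NNReal, 0 < c → {v | c ≤ f v} = ∅ ∨ InducesTree G {v | c ≤ f v}

/-- The subdivision graph of `G`: one new midpoint vertex on each edge of `G`,
adjacent exactly to the two endpoints of that edge. -/
def subdivGraph {V : Type*} (G : SimpleGraph V) : SimpleGraph (V ⊕ G.edgeSet) where
  Adj x y :=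
    match x, y with
    | Sum.inl v, Sum.inr e => v ∈ (e : Sym2 V)
    | Sum.inr e, Sum.inl v => v ∈ (e : Sym2 V)
    | _, _ => False
  symm := by
    refine ⟨?_⟩
    rintro (v | e) (w | e2) h
    · exact h.elim
    · exact h
    · exact h
    · exact h.elim
  loopless := by
    refine ⟨?_⟩
    rintro (v | e) h
    · exact h.elim
    · exact h.elim

/-- The canonical function on the subdivision graph: the degree on original vertices,
and `1` on midpoint vertices. -/
def ftilde {V : Type*} [Fintype V] (G : SimpleGraph V) [DecidableRel G.Adj] :
    V ⊕ G.edgeSet → NNReal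
  | Sum.inl v => (G.degree v : NNReal)
  | Sum.inr _ => 1

/-- The family `F^v_e`: indices of those components whose value at the midpoint of `e` is
at least the value at `v`, and whose value at `v` is at least the value at the midpoint of
every other edge incident to `v`. -/
def Fve {V : Type*} (G : SimpleGraph V) {k : ℕ} (f : Fin k → (V ⊕ G.edgeSet) → NNReal)
    (v : V) (e : G.edgeSet) : Set (Fin k) :=
  {i | f i (Sum.inl v) ≤ f i (Sum.inr e) ∧
    ∀ e2 : G.edgeSet, v ∈ (e2 : Sym2 V) → e2 ≠ e → f i (Sum.inr e2) ≤ f i (Sum.inl v)}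

/-!
Pick for every component `fᵢ` an edge `εᵢ` at `v` on whose midpoint `fᵢ` is largest among the
midpoints around `v`. Since `v` is not a mode, the superlevel tree of `fᵢ` at height `fᵢ(v)`
leaves `v` through a neighbouring midpoint, so `fᵢ(v) ≤ fᵢ(m_{εᵢ})`. Summing,
`deg v = ∑ᵢ fᵢ(v) ≤ ∑ᵢ fᵢ(m_{εᵢ}) ≤ ∑_{e ∋ v} ∑ᵢ fᵢ(m_e) = deg v`, so every inequality in this
chain is an equality: `fᵢ(v) = fᵢ(m_{εᵢ})` and `fᵢ` vanishes on the other midpoints around `v`.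
-/

open SimpleGraph Finset

theorem UnimodalOn.exists_adj_le_of_lt {W : Type*} {H : SimpleGraph W} {g : W → NNReal}
    (hg : UnimodalOn H g) {x y : W} (hx : 0 < g x) (hxy : g x < g y) :
    ∃ w, H.Adj x w ∧ g x ≤ g w := by
  have hxS : x ∈ {z | g x ≤ g z} := le_refl (g x)
  rcases hg (g x) hx with hS | hS
  · exact absurd (hS ▸ hxS) (Set.notMem_empty x)
  obtain ⟨p⟩ := hS.connected.preconnected ⟨x, hxS⟩ ⟨y, hxy.le⟩
  have hp : ¬ p.Nil := Walk.not_nil_of_ne fun h => hxy.ne (congrArg (g ∘ Subtype.val) h)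
  exact ⟨p.snd, Walk.adj_snd hp, p.snd.2⟩

section Subdivision

variable {V : Type*} {G : SimpleGraph V}

theorem subdivGraph_adj_inl {v : V} {x : V ⊕ G.edgeSet} :
    (subdivGraph G).Adj (Sum.inl v) x ↔ ∃ e : G.edgeSet, x = Sum.inr e ∧ v ∈ (e : Sym2 V) := by
  cases x <;> simp [subdivGraph]

theorem UnimodalOn.exists_incident_midpoint_ge {g : V ⊕ G.edgeSet → NNReal}
    (hg : UnimodalOn (subdivGraph G) g) {v : V} (hv : ∃ e : G.edgeSet, v ∈ (e : Sym2 V))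
    (hmode : ¬ ∀ y, g y ≤ g (Sum.inl v)) :
    ∃ e : G.edgeSet, v ∈ (e : Sym2 V) ∧ g (Sum.inl v) ≤ g (Sum.inr e) := by
  rcases (zero_le : 0 ≤ g (Sum.inl v)).eq_or_lt with h0 | hpos
  · obtain ⟨e, he⟩ := hv
    exact ⟨e, he, h0 ▸ zero_le⟩
  simp only [not_forall, not_le] at hmode
  obtain ⟨y, hy⟩ := hmode
  obtain ⟨w, hadj, hw⟩ := hg.exists_adj_le_of_lt hpos hy
  obtain ⟨e, rfl, he⟩ := subdivGraph_adj_inl.1 hadj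
  exact ⟨e, he, hw⟩

theorem card_filter_incident_eq_degree [Fintype V] [DecidableEq V] [DecidableRel G.Adj]
    (v : V) : #(univ.filter fun e : G.edgeSet => v ∈ (e : Sym2 V)) = G.degree v := by
  rw [← card_incidenceFinset_eq_degree, ← card_map (Function.Embedding.subtype _)]
  congr 1
  ext e
  simp [mem_incidenceFinset, incidenceSet, and_comm]

end Subdivision

theorem NNReal.eq_and_eq_zero_of_sum_eq_card {ι E : Type*} [Fintype ι] {N : Finset E}
    {a : ι → NNReal} {b : ι → E → NNReal} {ε : ι → E} (hε : ∀ i, ε i ∈ N)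
    (hab : ∀ i, a i ≤ b i (ε i)) (ha : ∑ i, a i = #N) (hb : ∀ e ∈ N, ∑ i, b i e ≤ 1) :
    (∀ i, a i = b i (ε i)) ∧ ∀ i, ∀ e ∈ N, e ≠ ε i → b i e = 0 := by
  classical
  have hsingle : ∀ i, b i (ε i) ≤ ∑ e ∈ N, b i e :=
    fun i => single_le_sum (fun _ _ => zero_le) (hε i)
  have hchain : ∑ i, ∑ e ∈ N, b i e ≤ ∑ i, a i :=
    calc ∑ i, ∑ e ∈ N, b i e = ∑ e ∈ N, ∑ i, b i e := sum_comm
      _ ≤ ∑ _e ∈ N, 1 := sum_le_sum hb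
      _ = ∑ i, a i := by simp [ha]
  have hab_sum : ∑ i, a i = ∑ i, b i (ε i) :=
    le_antisymm (sum_le_sum fun i _ => hab i) ((sum_le_sum fun i _ => hsingle i).trans hchain)
  have hsingle_sum : ∑ i, b i (ε i) = ∑ i, ∑ e ∈ N, b i e :=
    le_antisymm (sum_le_sum fun i _ => hsingle i) (hchain.trans hab_sum.le)
  refine ⟨fun i => (sum_eq_sum_iff_of_le fun i _ => hab i).1 hab_sum i (mem_univ i),
    fun i e he hne => ?_⟩
  have hi := (sum_eq_sum_iff_of_le fun i _ => hsingle i).1 hsingle_sum i (mem_univ i)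
  rw [← add_sum_erase N _ (hε i), left_eq_add, sum_eq_zero_iff] at hi
  exact hi e (mem_erase.2 ⟨hne, he⟩)

section Fve

variable {V : Type*} {G : SimpleGraph V} {k : ℕ} {f : Fin k → V ⊕ G.edgeSet → NNReal} {v : V}
  {ε : Fin k → G.edgeSet}

theorem mem_Fve_self (heq : ∀ i, f i (Sum.inl v) = f i (Sum.inr (ε i)))
    (hzero : ∀ i (e : G.edgeSet), v ∈ (e : Sym2 V) → e ≠ ε i → f i (Sum.inr e) = 0)
    (i : Fin k) : i ∈ Fve G f v (ε i) :=
  ⟨(heq i).le, fun e he hne => (hzero i e he hne).trans_le zero_le⟩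

theorem finsum_mem_Fve_eq_sum (heq : ∀ i, f i (Sum.inl v) = f i (Sum.inr (ε i)))
    (hzero : ∀ i (e : G.edgeSet), v ∈ (e : Sym2 V) → e ≠ ε i → f i (Sum.inr e) = 0)
    {e : G.edgeSet} (he : v ∈ (e : Sym2 V)) :
    ∑ᶠ i ∈ Fve G f v e, f i (Sum.inl v) = ∑ i, f i (Sum.inr e) := by
  rw [finsum_mem_def, finsum_eq_sum_of_fintype]
  refine sum_congr rfl fun i _ => ?_
  by_cases hi : ε i = e
  · subst hi
    rw [Set.indicator_of_mem (mem_Fve_self heq hzero i), heq]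
  have h0 : f i (Sum.inr e) = 0 := hzero i e he (Ne.symm hi)
  rw [h0]
  by_cases hmem : i ∈ Fve G f v e
  · rw [Set.indicator_of_mem hmem]
    exact le_antisymm (h0 ▸ hmem.1) zero_le
  · exact Set.indicator_of_notMem hmem _

end Fve

/-- If `v` is a vertex of positive degree that is not a mode of any component of a
unimodal decomposition of the canonical function on the subdivision graph, then every
component belongs to `F^v_e` for some edge `e` incident to `v`, and for every edge `e`
incident to `v` the values at `v` of the components in `F^v_e` sum to `1`. -/
theorem modeless_vertex_partition_sum_one
    {V : Type*} [Fintype V] [DecidableEq V] (G : SimpleGraph V) [DecidableRel G.Adj]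
    (k : ℕ) (f : Fin k → (V ⊕ G.edgeSet) → NNReal)
    (hf : ∀ i, UnimodalOn (subdivGraph G) (f i))
    (hsum : ∀ x, ∑ i, f i x = ftilde G x)
    (v : V) (hdeg : 1 ≤ G.degree v)
    (hmode : ∀ i, ¬ ∀ y, f i y ≤ f i (Sum.inl v)) :
    (∀ i : Fin k, ∃ e : G.edgeSet, v ∈ (e : Sym2 V) ∧ i ∈ Fve G f v e) ∧
      ∀ e : G.edgeSet, v ∈ (e : Sym2 V) →
        ∑ᶠ i ∈ Fve G f v e, f i (Sum.inl v) = 1 := by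
  set N := univ.filter fun e : G.edgeSet => v ∈ (e : Sym2 V)
  have hmemN : ∀ e, e ∈ N ↔ v ∈ (e : Sym2 V) := by simp [N]
  have hN : N.Nonempty := card_pos.1 (by rwa [card_filter_incident_eq_degree])
  choose ε hεN hεmax using fun i => N.exists_max_image (fun e => f i (Sum.inr e)) hN
  have hle : ∀ i, f i (Sum.inl v) ≤ f i (Sum.inr (ε i)) := fun i => by
    obtain ⟨e, he, hfe⟩ :=
      (hf i).exists_incident_midpoint_ge ⟨ε i, (hmemN _).1 (hεN i)⟩ (hmode i)
    exact hfe.trans (hεmax i e ((hmemN e).2 he))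
  obtain ⟨heq, hzero⟩ := NNReal.eq_and_eq_zero_of_sum_eq_card hεN hle
    (by rw [hsum, ftilde, card_filter_incident_eq_degree]) fun e _ => (hsum (Sum.inr e)).le
  have hzero' : ∀ i (e : G.edgeSet), v ∈ (e : Sym2 V) → e ≠ ε i → f i (Sum.inr e) = 0 :=
    fun i e he => hzero i e ((hmemN e).2 he)
  exact ⟨fun i => ⟨ε i, (hmemN _).1 (hεN i), mem_Fve_self heq hzero' i⟩,
    fun e he => (finsum_mem_Fve_eq_sum heq hzero' he).trans (hsum (Sum.inr e))⟩
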